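/- Let A be an admissible domain. Then there exists a constant C > 0 depending only on d_A such that for all N ∈ ℕ and all z, w ∈ A, |S_N(√N z, √N w)| ≤ C. -/

import Mathlib

open MeasureTheory ProbabilityTheory Filter Topology ComplexConjugate

noncomputable section

/-- The open upper half of the unit disk `𝔻⁺`. -/
def upperHalfDisk : Set ℂ := {z : ℂ | ‖z‖ < 1 ∧ 0 < z.im}

/-- A (plane) domain: a nonempty connected open subset of `ℂ`. -/
def IsPlaneDomain (A : Set ℂ) : Prop := IsOpen A ∧ IsConnected A

/-- A domain is admissible if its closure is contained in the upper half disk. -/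
def IsAdmissible (A : Set ℂ) : Prop := closure A ⊆ upperHalfDisk

/-- `d_A`: the distance between `A` and the boundary of the upper half disk. -/
def dA (A : Set ℂ) : ℝ :=
  sInf {r : ℝ | ∃ z ∈ A, ∃ w ∈ frontier upperHalfDisk, r = dist z w}

/-- Lipschitz domain: near every boundary point, after a rigid motion of the plane,
the set coincides with the subgraph of a Lipschitz function. -/
def IsLipschitzDomain (A : Set ℂ) : Prop :=
  ∀ x ∈ frontier A, ∃ (φ : ℂ ≃ᵃⁱ[ℝ] ℂ) (K : NNReal) (f : ℝ → ℝ) (ε : ℝ),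
    0 < ε ∧ LipschitzWith K f ∧
      ∀ y ∈ Metric.ball x ε, (y ∈ A ↔ (φ y).im < f ((φ y).re))

/-- `ℓ(∂A)`: the one-dimensional Hausdorff measure of the boundary of `A`. -/
def boundaryLength (A : Set ℂ) : ℝ :=
  ((MeasureTheory.Measure.hausdorffMeasure 1 : Measure ℂ) (frontier A)).toReal

/-- The law of the `N × N` real Ginibre matrix: i.i.d. standard Gaussian entries,
realized on the canonical product space. -/
def ginibreMeasure (N : ℕ) : Measure ((Fin N × Fin N) → ℝ) :=
  Measure.pi fun _ => gaussianReal 0 1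

/-- The real Ginibre matrix `G_N` as a function of the sample point. -/
def ginibreMatrix (N : ℕ) (ω : (Fin N × Fin N) → ℝ) : Matrix (Fin N) (Fin N) ℝ :=
  Matrix.of fun i j => ω (i, j)

/-- `W_N = N^{-1/2} G_N`. -/
def Wmatrix (N : ℕ) (ω : (Fin N × Fin N) → ℝ) : Matrix (Fin N) (Fin N) ℝ :=
  (Real.sqrt N)⁻¹ • ginibreMatrix N ω

/-- The eigenvalues (with multiplicity) of a real matrix: the multiset of complex
roots of its characteristic polynomial. -/
def eigs {N : ℕ} (M : Matrix (Fin N) (Fin N) ℝ) : Multiset ℂ :=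
  (Matrix.charpoly (M.map fun x => (x : ℂ))).roots

/-- The number of eigenvalues of `M` lying in `A`, with multiplicity. -/
def countIn (A : Set ℂ) {N : ℕ} (M : Matrix (Fin N) (Fin N) ℝ) : ℕ :=
  letI := Classical.decPred fun z : ℂ => z ∈ A
  Multiset.countP (fun z => z ∈ A) (eigs M)

/-- The centered eigenvalue counting statistic `X_A` of `W_N`. -/
def XA (A : Set ℂ) (N : ℕ) (ω : (Fin N × Fin N) → ℝ) : ℝ :=
  (countIn A (Wmatrix N ω) : ℝ) -
    ∫ ω', (countIn A (Wmatrix N ω') : ℝ) ∂(ginibreMeasure N)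

/-- `s_N(z) = e^{-z} ∑_{j<N} z^j/j!`. -/
def sN (N : ℕ) (z : ℂ) : ℂ :=
  Complex.exp (-z) * ∑ j ∈ Finset.range N, z ^ j / (Nat.factorial j : ℂ)

/-- The complementary error function. -/
def erfc (x : ℝ) : ℝ := (2 / Real.sqrt Real.pi) * ∫ t in Set.Ioi x, Real.exp (-t ^ 2)

/-- `G(z,w) = √(erfc(√2 Im z) erfc(√2 Im w))`. -/
def Gker (z w : ℂ) : ℝ :=
  Real.sqrt (erfc (Real.sqrt 2 * z.im) * erfc (Real.sqrt 2 * w.im))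

/-- The kernel `S_N`. -/
def SN (N : ℕ) (z w : ℂ) : ℂ :=
  Complex.I * Complex.exp (-(1 / 2 : ℂ) * (z - conj w) ^ 2) / (Real.sqrt (2 * Real.pi) : ℂ) *
    (conj w - z) * (Gker z w : ℂ) * sN N (z * conj w)

/-- The kernel `D_N`. -/
def DN (N : ℕ) (z w : ℂ) : ℂ :=
  Complex.exp (-(1 / 2 : ℂ) * (z - w) ^ 2) / (Real.sqrt (2 * Real.pi) : ℂ) *
    (w - z) * (Gker z w : ℂ) * sN N (z * w)

/-- The kernel `I_N`. -/
def IN (N : ℕ) (z w : ℂ) : ℂ :=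
  Complex.exp (-(1 / 2 : ℂ) * (conj z - conj w) ^ 2) / (Real.sqrt (2 * Real.pi) : ℂ) *
    (conj z - conj w) * (Gker z w : ℂ) * sN N (conj z * conj w)

/-- The Pfaffian of a `2n × 2n` complex matrix, via the sum over permutations. -/
def Pf {n : ℕ} (M : Matrix (Fin (2 * n)) (Fin (2 * n)) ℂ) : ℂ :=
  (1 / (2 ^ n * (Nat.factorial n : ℂ))) *
    ∑ σ : Equiv.Perm (Fin (2 * n)),
      ((Equiv.Perm.sign σ : ℤ) : ℂ) *
        ∏ i : Fin n,
          M (σ ⟨2 * i.val, by have := i.isLt; omega⟩)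
            (σ ⟨2 * i.val + 1, by have := i.isLt; omega⟩)

/-- The `2 × 2` matrix kernel `K(z,w)`. -/
def Kmat (N : ℕ) (z w : ℂ) : Matrix (Fin 2) (Fin 2) ℂ :=
  !![DN N z w, SN N z w; -(SN N w z), IN N z w]

/-- The `2k × 2k` matrix assembled from the `2 × 2` blocks `K(z_i, z_j)`. -/
def blockK (N k : ℕ) (z : Fin k → ℂ) : Matrix (Fin (2 * k)) (Fin (2 * k)) ℂ :=
  Matrix.of fun p q =>
    Kmat N (z ⟨p.val / 2, by have := p.isLt; omega⟩) (z ⟨q.val / 2, by have := q.isLt; omega⟩)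
      ⟨p.val % 2, Nat.mod_lt _ (by omega)⟩ ⟨q.val % 2, Nat.mod_lt _ (by omega)⟩

/-- Cyclic successor on `Fin k` (so that `z_{k+1} = z_1`). -/
def cnext {k : ℕ} (i : Fin k) : Fin k := ⟨(i.val + 1) % k, Nat.mod_lt _ i.pos⟩

/-- `g(z,w) = Re(z) Im(w) - Re(w) Im(z)`. -/
def gfun (z w : ℂ) : ℝ := z.re * w.im - w.re * z.im

/-- The cyclic exponent `-(N/2) ∑ |z_i - z_{i+1}|² + iN ∑ g(z_i, z_{i+1})`. -/
def cycExp (N k : ℕ) (z : Fin k → ℂ) : ℂ :=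
  (Complex.ofReal (-((N : ℝ) / 2) * ∑ i : Fin k, ‖z i - z (cnext i)‖ ^ 2)) +
    Complex.I * (N : ℂ) * Complex.ofReal (∑ i : Fin k, gfun (z i) (z (cnext i)))

/-- `R_k = N^k ∫_{A^k} ∏_{i=1}^k S_N(√N z_i, √N z_{i+1}) dz`, with `z_{k+1} = z_1`. -/
def Rk (N k : ℕ) (A : Set ℂ) : ℂ :=
  (N : ℂ) ^ k *
    ∫ z : Fin k → ℂ in Set.univ.pi fun _ => A,
      ∏ i : Fin k, SN N ((Real.sqrt N : ℂ) * z i) ((Real.sqrt N : ℂ) * z (cnext i))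
      ∂(Measure.pi fun _ => volume)

/-- The sum of `f` over `k`-tuples of pairwise distinct indices of a multiset. -/
def tupleSum (k : ℕ) (s : Multiset ℂ) (f : (Fin k → ℂ) → ℝ) : ℝ :=
  ∑ t : Fin k ↪ Fin s.toList.length, f fun i => s.toList.get (t i)

/-! With `Z = √N z`, `W = √N w`, the crude bounds `|s_N(ζ)| ≤ e^{|ζ| - Re ζ}` and
`erfc x ≤ e^{-x²} / (x √π)` give
`|S_N(Z, W)| ≤ e^{-(|Z| - |W|)² / 2} (|Z| + |W|) / (2π √(Im Z Im W))`:
the Gaussian factors cancel the growth of `s_N` exactly. The remaining ratio is invariant under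
the scaling by `√N`, and on `A ⊆ 𝔻⁺`, where `|z| < 1` and `Im z ≥ d_A`, it is at most
`1 / (π d_A)`. -/

theorem hasDerivAt_neg_exp_neg_sq_div_two (t : ℝ) :
    HasDerivAt (fun t : ℝ => -Real.exp (-t ^ 2) / 2) (t * Real.exp (-t ^ 2)) t := by
  have h : HasDerivAt (fun t : ℝ => -t ^ 2) (-(2 * t)) t :=
    (hasDerivAt_pow 2 t).neg.congr_deriv (by simp)
  exact (h.exp.neg.div_const 2).congr_deriv (by ring)

theorem tendsto_neg_exp_neg_sq_div_two :
    Tendsto (fun t : ℝ => -Real.exp (-t ^ 2) / 2) atTop (𝓝 0) := by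
  have h : Tendsto (fun t : ℝ => Real.exp (-t ^ 2)) atTop (𝓝 0) :=
    Real.tendsto_exp_atBot.comp <| tendsto_neg_atTop_atBot.comp (tendsto_pow_atTop two_ne_zero)
  simpa using h.neg.div_const 2

theorem integrableOn_Ioi_mul_exp_neg_sq {x : ℝ} (hx : 0 ≤ x) :
    IntegrableOn (fun t : ℝ => t * Real.exp (-t ^ 2)) (Set.Ioi x) :=
  integrableOn_Ioi_deriv_of_nonneg' (fun _ _ => hasDerivAt_neg_exp_neg_sq_div_two _)
    (fun _ ht => mul_nonneg (hx.trans (le_of_lt ht)) (Real.exp_pos _).le)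
    tendsto_neg_exp_neg_sq_div_two

theorem integral_Ioi_mul_exp_neg_sq {x : ℝ} (hx : 0 ≤ x) :
    ∫ t in Set.Ioi x, t * Real.exp (-t ^ 2) = Real.exp (-x ^ 2) / 2 := by
  rw [integral_Ioi_of_hasDerivAt_of_nonneg' (fun _ _ => hasDerivAt_neg_exp_neg_sq_div_two _)
    (fun _ ht => mul_nonneg (hx.trans (le_of_lt ht)) (Real.exp_pos _).le)
    tendsto_neg_exp_neg_sq_div_two]
  ring

theorem erfc_nonneg (x : ℝ) : 0 ≤ erfc x :=
  mul_nonneg (by positivity) <|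
    setIntegral_nonneg measurableSet_Ioi fun t _ => (Real.exp_pos _).le

-- `e^{-t²} ≤ (t / x) e^{-t²}` on `t > x`, and `t e^{-t²}` has an explicit primitive.
theorem erfc_le_exp_neg_sq_div {x : ℝ} (hx : 0 < x) :
    erfc x ≤ Real.exp (-x ^ 2) / (x * Real.sqrt Real.pi) := by
  have hgauss : IntegrableOn (fun t : ℝ => Real.exp (-t ^ 2)) (Set.Ioi x) := by
    simpa using (integrable_exp_neg_mul_sq (b := 1) one_pos).integrableOn
  have htail : ∫ t in Set.Ioi x, Real.exp (-t ^ 2) ≤ x⁻¹ * (Real.exp (-x ^ 2) / 2) := by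
    rw [← integral_Ioi_mul_exp_neg_sq hx.le, ← integral_const_mul]
    refine setIntegral_mono_on hgauss ((integrableOn_Ioi_mul_exp_neg_sq hx.le).const_mul _)
      measurableSet_Ioi fun t ht => ?_
    have h1 : 1 ≤ x⁻¹ * t := by
      rw [inv_mul_eq_div, one_le_div hx]; exact le_of_lt ht
    nlinarith [Real.exp_pos (-t ^ 2)]
  calc erfc x ≤ 2 / Real.sqrt Real.pi * (x⁻¹ * (Real.exp (-x ^ 2) / 2)) :=
        mul_le_mul_of_nonneg_left htail (by positivity)
    _ = Real.exp (-x ^ 2) / (x * Real.sqrt Real.pi) := by field_simp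

theorem Gker_nonneg (Z W : ℂ) : 0 ≤ Gker Z W := Real.sqrt_nonneg _

theorem Gker_le {Z W : ℂ} (hZ : 0 < Z.im) (hW : 0 < W.im) :
    Gker Z W ≤ Real.exp (-(Z.im ^ 2 + W.im ^ 2)) / Real.sqrt (2 * Real.pi * (Z.im * W.im)) := by
  have hsq2 : Real.sqrt 2 ^ 2 = 2 := Real.sq_sqrt zero_le_two
  have hsqπ : Real.sqrt Real.pi ^ 2 = Real.pi := Real.sq_sqrt Real.pi_pos.le
  have hprod : erfc (Real.sqrt 2 * Z.im) * erfc (Real.sqrt 2 * W.im)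
      ≤ (Real.exp (-(Z.im ^ 2 + W.im ^ 2)) / Real.sqrt (2 * Real.pi * (Z.im * W.im))) ^ 2 := by
    refine (mul_le_mul (erfc_le_exp_neg_sq_div (by positivity))
      (erfc_le_exp_neg_sq_div (by positivity)) (erfc_nonneg _) (by positivity)).trans_eq ?_
    rw [div_pow, Real.sq_sqrt (by positivity), ← Real.exp_nat_mul, div_mul_div_comm,
      ← Real.exp_add]
    congr 1
    · congr 1; push_cast; rw [mul_pow, mul_pow, hsq2]; ring
    · linear_combination Z.im * W.im * (Real.sqrt Real.pi ^ 2 * hsq2 + 2 * hsqπ)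
  exact (Real.sqrt_le_sqrt hprod).trans_eq (Real.sqrt_sq (by positivity))

theorem norm_sN_le (N : ℕ) (z : ℂ) : ‖sN N z‖ ≤ Real.exp (‖z‖ - z.re) := by
  rw [sN, norm_mul, Complex.norm_exp, Complex.neg_re, sub_eq_neg_add, Real.exp_add]
  refine mul_le_mul_of_nonneg_left ((norm_sum_le _ _).trans ?_) (Real.exp_pos _).le
  simpa only [norm_div, norm_pow, Complex.norm_natCast] using
    Real.sum_le_exp_of_nonneg (norm_nonneg z) N

theorem exponent_SN_eq (Z W : ℂ) :
    (-(1 / 2 : ℂ) * (Z - conj W) ^ 2).re - (Z.im ^ 2 + W.im ^ 2)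
      + (‖Z * conj W‖ - (Z * conj W).re) = -(‖Z‖ - ‖W‖) ^ 2 / 2 := by
  have hZ := Complex.sq_norm Z
  have hW := Complex.sq_norm W
  rw [Complex.normSq_apply] at hZ hW
  simp only [norm_mul, Complex.norm_conj, sq, Complex.mul_re, Complex.mul_im, Complex.sub_re,
    Complex.sub_im, Complex.conj_re, Complex.conj_im, Complex.neg_re, Complex.neg_im,
    Complex.div_ofNat_re, Complex.div_ofNat_im, Complex.one_re, Complex.one_im] at hZ hW ⊢
  linear_combination (1 / 2 : ℝ) * (hZ + hW)

theorem norm_SN_le (N : ℕ) {Z W : ℂ} (hZ : 0 < Z.im) (hW : 0 < W.im) :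
    ‖SN N Z W‖ ≤ (‖Z‖ + ‖W‖) / (2 * Real.pi * Real.sqrt (Z.im * W.im)) := by
  have hnorm : ‖SN N Z W‖ = Real.exp ((-(1 / 2 : ℂ) * (Z - conj W) ^ 2).re)
      / Real.sqrt (2 * Real.pi) * ‖conj W - Z‖ * Gker Z W * ‖sN N (Z * conj W)‖ := by
    rw [SN, norm_mul, norm_mul, norm_mul, norm_div, norm_mul, Complex.norm_I, one_mul,
      Complex.norm_exp, Complex.norm_real, Complex.norm_real,
      Real.norm_of_nonneg (Real.sqrt_nonneg _), Real.norm_of_nonneg (Gker_nonneg Z W)]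
  have hdiff : ‖conj W - Z‖ ≤ ‖Z‖ + ‖W‖ := by
    simpa only [Complex.norm_conj, add_comm ‖Z‖] using norm_sub_le (conj W) Z
  have hexp : Real.exp ((-(1 / 2 : ℂ) * (Z - conj W) ^ 2).re) * Real.exp (-(Z.im ^ 2 + W.im ^ 2))
      * Real.exp (‖Z * conj W‖ - (Z * conj W).re) ≤ 1 := by
    rw [← Real.exp_add, ← Real.exp_add, ← sub_eq_add_neg, exponent_SN_eq, Real.exp_le_one_iff]
    nlinarith [sq_nonneg (‖Z‖ - ‖W‖)]
  have hsqrt : Real.sqrt (2 * Real.pi) * Real.sqrt (2 * Real.pi * (Z.im * W.im))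
      = 2 * Real.pi * Real.sqrt (Z.im * W.im) := by
    rw [Real.sqrt_mul (by positivity) (Z.im * W.im), ← mul_assoc,
      Real.mul_self_sqrt (by positivity)]
  calc ‖SN N Z W‖
      ≤ Real.exp ((-(1 / 2 : ℂ) * (Z - conj W) ^ 2).re) / Real.sqrt (2 * Real.pi) * (‖Z‖ + ‖W‖)
        * (Real.exp (-(Z.im ^ 2 + W.im ^ 2)) / Real.sqrt (2 * Real.pi * (Z.im * W.im)))
        * Real.exp (‖Z * conj W‖ - (Z * conj W).re) := by
        rw [hnorm]
        gcongr
        exacts [Real.sqrt_nonneg _, Gker_le hZ hW, norm_sN_le N _]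
    _ = Real.exp ((-(1 / 2 : ℂ) * (Z - conj W) ^ 2).re) * Real.exp (-(Z.im ^ 2 + W.im ^ 2))
        * Real.exp (‖Z * conj W‖ - (Z * conj W).re) * ((‖Z‖ + ‖W‖) /
          (Real.sqrt (2 * Real.pi) * Real.sqrt (2 * Real.pi * (Z.im * W.im)))) := by
        field_simp
    _ ≤ (‖Z‖ + ‖W‖) / (2 * Real.pi * Real.sqrt (Z.im * W.im)) := by
        rw [hsqrt]
        exact mul_le_of_le_one_left (by positivity) hexp

theorem norm_SN_real_mul_le (N : ℕ) {t : ℝ} (ht : 0 < t) {z w : ℂ} (hz : 0 < z.im)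
    (hw : 0 < w.im) :
    ‖SN N (t * z) (t * w)‖ ≤ (‖z‖ + ‖w‖) / (2 * Real.pi * Real.sqrt (z.im * w.im)) := by
  have him (u : ℂ) : ((t : ℂ) * u).im = t * u.im := by simp
  have hnorm (u : ℂ) : ‖(t : ℂ) * u‖ = t * ‖u‖ := by
    rw [norm_mul, Complex.norm_real, Real.norm_of_nonneg ht.le]
  have hsqrt : Real.sqrt (t * z.im * (t * w.im)) = t * Real.sqrt (z.im * w.im) := by
    rw [show t * z.im * (t * w.im) = t ^ 2 * (z.im * w.im) by ring,
      Real.sqrt_mul (sq_nonneg t), Real.sqrt_sq ht.le]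
  refine (norm_SN_le N (by rw [him]; positivity) (by rw [him]; positivity)).trans_eq ?_
  rw [him, him, hnorm, hnorm, hsqrt]
  field_simp

theorem isOpen_upperHalfDisk : IsOpen upperHalfDisk :=
  (isOpen_lt continuous_norm continuous_const).inter (isOpen_lt continuous_const Complex.continuous_im)

theorem ofReal_re_mem_frontier_upperHalfDisk {z : ℂ} (hz : z ∈ upperHalfDisk) :
    (z.re : ℂ) ∈ frontier upperHalfDisk := by
  rw [isOpen_upperHalfDisk.frontier_eq]
  refine ⟨?_, fun h => by simpa using h.2⟩
  set f : ℝ → ℂ := fun s => z.re + (s * z.im : ℝ) * Complex.I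
  have hf : Tendsto f (𝓝[>] 0) (𝓝 z.re) := by
    have : Continuous f := by fun_prop
    simpa [f] using (this.tendsto 0).mono_left nhdsWithin_le_nhds
  refine mem_closure_of_tendsto hf ?_
  filter_upwards [Ioo_mem_nhdsGT one_pos] with s ⟨hs0, hs1⟩
  have him : (f s).im = s * z.im := by simp [f]
  have hre : (f s).re = z.re := by simp [f]
  have hnorm : ‖f s‖ ^ 2 ≤ ‖z‖ ^ 2 := by
    rw [Complex.sq_norm, Complex.sq_norm, Complex.normSq_apply, Complex.normSq_apply, him, hre]
    nlinarith [mul_pos hs0 hz.2, mul_pos (sub_pos.2 hs1) hz.2]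
  refine ⟨?_, him ▸ mul_pos hs0 hz.2⟩
  exact ((pow_le_pow_iff_left₀ (norm_nonneg _) (norm_nonneg _) two_ne_zero).1 hnorm).trans_lt hz.1

theorem dA_le_im {A : Set ℂ} (hA : IsAdmissible A) {z : ℂ} (hz : z ∈ A) : dA A ≤ z.im := by
  have hz' : z ∈ upperHalfDisk := hA (subset_closure hz)
  refine csInf_le ⟨0, ?_⟩ ⟨z, hz, z.re, ofReal_re_mem_frontier_upperHalfDisk hz', ?_⟩
  · rintro r ⟨z, -, w, -, rfl⟩
    exact dist_nonneg
  · rw [Complex.dist_eq, show z - z.re = z.im * Complex.I by apply Complex.ext <;> simp,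
      norm_mul, Complex.norm_I, mul_one, Complex.norm_real, Real.norm_of_nonneg hz'.2.le]

theorem dA_pos {A : Set ℂ} (hne : A.Nonempty) (hA : IsAdmissible A) : 0 < dA A := by
  have hcompact : IsCompact (closure A) := by
    refine (Metric.isBounded_ball (x := (0 : ℂ)) (r := 1)).subset ?_ |>.isCompact_closure
    intro z hz
    simpa using (hA (subset_closure hz)).1
  have hdisj : Disjoint (closure A) (frontier upperHalfDisk) := by
    rw [isOpen_upperHalfDisk.frontier_eq]
    exact Set.disjoint_sdiff_right.mono_left hA
  obtain ⟨r, hr, hsep⟩ := Metric.exists_pos_forall_lt_edist hcompact isClosed_frontier hdisj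
  obtain ⟨z, hz⟩ := hne
  refine lt_of_lt_of_le (NNReal.coe_pos.2 hr) (le_csInf ⟨_, z, hz, z.re,
    ofReal_re_mem_frontier_upperHalfDisk (hA (subset_closure hz)), rfl⟩ ?_)
  rintro _ ⟨x, hx, y, hy, rfl⟩
  have := hsep x (subset_closure hx) y hy
  rw [edist_nndist, ENNReal.coe_lt_coe, ← NNReal.coe_lt_coe, coe_nndist] at this
  exact this.le

/-- The kernel `S_N` is bounded on admissible domains, with a constant depending
only on `d_A`. -/
theorem statement_3 :
    ∃ C : ℝ → ℝ, ∀ A : Set ℂ, IsPlaneDomain A → IsAdmissible A →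
      0 < C (dA A) ∧
        ∀ N : ℕ, 1 ≤ N → ∀ z ∈ A, ∀ w ∈ A,
          ‖SN N ((Real.sqrt N : ℂ) * z) ((Real.sqrt N : ℂ) * w)‖ ≤ C (dA A) := by
  refine ⟨fun d => 1 / (Real.pi * d), fun A hD hA => ?_⟩
  have hd : 0 < dA A := dA_pos hD.2.nonempty hA
  refine ⟨by positivity, fun N hN z hz w hw => ?_⟩
  have hz' : z ∈ upperHalfDisk := hA (subset_closure hz)
  have hw' : w ∈ upperHalfDisk := hA (subset_closure hw)
  have hsqrt : dA A ≤ Real.sqrt (z.im * w.im) :=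
    Real.le_sqrt_of_sq_le <| by
      nlinarith [dA_le_im hA hz, dA_le_im hA hw]
  calc ‖SN N ((Real.sqrt N : ℂ) * z) ((Real.sqrt N : ℂ) * w)‖
      ≤ (‖z‖ + ‖w‖) / (2 * Real.pi * Real.sqrt (z.im * w.im)) :=
        norm_SN_real_mul_le N (Real.sqrt_pos.2 (by exact_mod_cast hN)) hz'.2 hw'.2
    _ ≤ 2 / (2 * Real.pi * dA A) := by
        gcongr
        linarith [hz'.1, hw'.1]
    _ = 1 / (Real.pi * dA A) := by field_simp
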